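/- arXiv:math/0104064 — 6 statements merged into one kernel-verified Lean document; each statement's English description precedes it below -/
import Mathlib

section
/- Let m ∈ {1, 2, 4, 8}. If p and q are polynomials with natural-number coefficients such that p · q = 1 + t^m + t^(2m), then p = 1 or q = 1. (This is the factorization claim used to prove that the point space of a finite-dimensional projective plane does not factor as a product: its Z/2-Poincaré polynomial 1 + t^m + t^(2m) does not factor over ℕ.) -/
open Polynomial

lemma coeff_le_eval_one (p : Polynomial ℕ) (n : ℕ) : p.coeff n ≤ p.eval 1 := by
  rw [eval_eq_sum_range' (Nat.lt_succ_self p.natDegree)]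
  simp only [one_pow, mul_one]
  by_cases hn : n ≤ p.natDegree
  · exact Finset.single_le_sum (fun i _ => Nat.zero_le _)
      (Finset.mem_range.mpr (Nat.lt_succ_of_le hn))
  · rw [p.coeff_eq_zero_of_natDegree_lt (lt_of_not_ge hn)]
    exact Nat.zero_le _

lemma eq_one_of_eval_one (p : Polynomial ℕ) (h0 : p.coeff 0 = 1)
    (h1 : p.eval 1 = 1) : p = 1 := by
  ext n
  rcases Nat.eq_zero_or_pos n with rfl | hn
  · simpa using h0
  · have hle := coeff_le_eval_one p n
    rw [h1] at hle
    have hzero : p.coeff n = 0 := by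
      by_contra hne
      have : 2 ≤ p.eval 1 := by
        rw [eval_eq_sum_range' (Nat.lt_succ_self p.natDegree)]
        simp only [one_pow, mul_one]
        have hnd : n ≤ p.natDegree := le_natDegree_of_ne_zero hne
        have hsum := Finset.add_sum_erase (Finset.range (p.natDegree + 1))
          p.coeff (Finset.mem_range.mpr (Nat.succ_pos _))
        rw [← hsum]
        have hmem : n ∈ (Finset.range (p.natDegree + 1)).erase 0 := by
          simp [Finset.mem_erase, hn.ne', Nat.lt_succ_of_le hnd]
        have hle2 := Finset.single_le_sum (f := p.coeff)
          (fun i _ => Nat.zero_le _) hmem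
        omega
      omega
    rw [hzero, Polynomial.coeff_one]
    simp [hn.ne']

/-- For `m ∈ {1, 2, 4, 8}`, every factorization over `ℕ` of `1 + t^m + t^(2m)`
is trivial: if `p * q = 1 + X^m + X^(2*m)` in `ℕ[t]`, then `p = 1` or `q = 1`. -/
theorem projective_plane_poincare_poly_does_not_factor
    (m : ℕ) (hm : m = 1 ∨ m = 2 ∨ m = 4 ∨ m = 8)
    (p q : Polynomial ℕ)
    (h : p * q = 1 + X ^ m + X ^ (2 * m)) :
    p = 1 ∨ q = 1 := by
  have hm0 : 0 < m := by omega
  have hc0 : p.coeff 0 * q.coeff 0 = 1 := by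
    have := congrArg (fun r => Polynomial.coeff r 0) h
    simpa [coeff_one, coeff_X_pow, (show ¬((0:ℕ) = m) by omega),
      (show ¬((0:ℕ) = 2 * m) by omega)] using this
  have hp0 : p.coeff 0 = 1 := Nat.eq_one_of_mul_eq_one_right hc0
  have hq0 : q.coeff 0 = 1 := Nat.eq_one_of_mul_eq_one_left hc0
  have he : p.eval 1 * q.eval 1 = 3 := by
    have := congrArg (fun r => Polynomial.eval 1 r) h
    simpa using this
  have h3 : Nat.Prime 3 := by norm_num
  rcases (h3.eq_one_or_self_of_dvd (p.eval 1) ⟨q.eval 1, he.symm⟩) with h1 | h1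
  · exact Or.inl (eq_one_of_eval_one p hp0 h1)
  · right
    apply eq_one_of_eval_one q hq0
    rw [h1] at he
    omega
end

section
/- Let m ≥ 1 be a natural number. If p and q are nonconstant polynomials with natural-number coefficients such that p · q = 1 + t^m + t^(2m) + t^(3m) + t^(4m) + t^(5m), then either {p, q} = {1 + t^m, 1 + t^(2m) + t^(4m)} or {p, q} = {1 + t^m + t^(2m), 1 + t^(3m)}. (This is the classification of factorizations over ℕ of the Z/2-Poincaré polynomial of the point space of a finite-dimensional hexagon, used in the proof that this point space does not factor as a product.) -/
/-!
Over `ℕ` there is no cancellation, so the term `pₖ q₀` of the `k`-th coefficient of `p q` forces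
`pₖ = 0` wherever `p q` has a zero coefficient. Since the constant terms are `1`, both factors
are polynomials in `t^m`, and contracting `t^m ↦ t` reduces the problem to `m = 1`. There the
coefficients of the factors are `0` or `1` and satisfy the convolution equations of
`1 + t + ⋯ + t⁵`, which leave exactly the two stated factorizations.
-/

open Polynomial

theorem coeff_mul_coeff_zero_le {R : Type*} [Semiring R] [PartialOrder R]
    [CanonicallyOrderedAdd R] (p q : R[X]) (n : ℕ) :
    p.coeff n * q.coeff 0 ≤ (p * q).coeff n := by
  rw [coeff_mul]
  exact Finset.single_le_sum (f := fun x : ℕ × ℕ => p.coeff x.1 * q.coeff x.2)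
    (fun _ _ => zero_le) (a := (n, 0)) (Finset.HasAntidiagonal.mem_antidiagonal.mpr (add_zero n))

theorem expand_contract_of_coeff_eq_zero {R : Type*} [CommSemiring R] {m : ℕ} (hm : m ≠ 0)
    {f : R[X]} (hf : ∀ n, ¬ m ∣ n → f.coeff n = 0) : expand R m (contract m f) = f := by
  ext n
  rw [coeff_expand (Nat.pos_of_ne_zero hm), coeff_contract hm]
  split_ifs with hn
  · rw [Nat.div_mul_cancel hn]
  · exact (hf n hn).symm

theorem expand_contract_of_mul_eq_expand {R : Type*} [CommSemiring R] [PartialOrder R]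
    [CanonicallyOrderedAdd R] [NoZeroDivisors R] {m : ℕ} (hm : m ≠ 0) {p q f : R[X]}
    (h : p * q = expand R m f) (hq : q.coeff 0 ≠ 0) : expand R m (contract m p) = p := by
  refine expand_contract_of_coeff_eq_zero hm fun n hn => ?_
  have hle := coeff_mul_coeff_zero_le p q n
  rw [h, coeff_expand (Nat.pos_of_ne_zero hm), if_neg hn, nonpos_iff_eq_zero] at hle
  exact (mul_eq_zero.mp hle).resolve_right hq

/-- The coefficients `aᵢ`, `bᵢ` of `P * Q = 1 + X + ⋯ + X⁵` with `P`, `Q` of degree at most `4`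
and constant term `1`. Each equation bounds its two new unknowns by `1`, so this is a finite
check. -/
theorem coeff_eqs_of_mul_eq_geom_sum_six (a₁ a₂ a₃ a₄ b₁ b₂ b₃ b₄ : ℕ)
    (h₁ : b₁ + a₁ = 1)
    (h₂ : b₂ + a₁ * b₁ + a₂ = 1)
    (h₃ : b₃ + a₁ * b₂ + a₂ * b₁ + a₃ = 1)
    (h₄ : b₄ + a₁ * b₃ + a₂ * b₂ + a₃ * b₁ + a₄ = 1)
    (h₅ : a₁ * b₄ + a₂ * b₃ + a₃ * b₂ + a₄ * b₁ = 1)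
    (h₆ : a₂ * b₄ + a₃ * b₃ + a₄ * b₂ = 0)
    (h₇ : a₃ * b₄ + a₄ * b₃ = 0)
    (h₈ : a₄ * b₄ = 0) :
    (a₁, a₂, a₃, a₄, b₁, b₂, b₃, b₄) = (1, 0, 0, 0, 0, 1, 0, 1) ∨
    (a₁, a₂, a₃, a₄, b₁, b₂, b₃, b₄) = (0, 1, 0, 1, 1, 0, 0, 0) ∨
    (a₁, a₂, a₃, a₄, b₁, b₂, b₃, b₄) = (1, 1, 0, 0, 0, 0, 1, 0) ∨
    (a₁, a₂, a₃, a₄, b₁, b₂, b₃, b₄) = (0, 0, 1, 0, 1, 1, 0, 0) := by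
  have : a₁ ≤ 1 := by omega
  have : b₁ ≤ 1 := by omega
  have : a₂ ≤ 1 := by omega
  have : b₂ ≤ 1 := by omega
  have : a₃ ≤ 1 := by omega
  have : b₃ ≤ 1 := by omega
  have : a₄ ≤ 1 := by omega
  have : b₄ ≤ 1 := by omega
  simp only [Prod.mk.injEq]
  interval_cases a₁ <;> interval_cases b₁ <;> interval_cases a₂ <;> interval_cases b₂ <;>
    interval_cases a₃ <;> interval_cases b₃ <;> interval_cases a₄ <;> interval_cases b₄ <;> omega

theorem factors_of_mul_eq_geom_sum_six {P Q : ℕ[X]} (hP : 1 ≤ P.natDegree)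
    (hQ : 1 ≤ Q.natDegree) (h : P * Q = ∑ i ∈ Finset.range 6, X ^ i) :
    (P = 1 + X ∧ Q = 1 + X ^ 2 + X ^ 4) ∨ (P = 1 + X ^ 2 + X ^ 4 ∧ Q = 1 + X) ∨
    (P = 1 + X + X ^ 2 ∧ Q = 1 + X ^ 3) ∨ (P = 1 + X ^ 3 ∧ Q = 1 + X + X ^ 2) := by
  have hdeg : P.natDegree + Q.natDegree = 5 := by
    rw [← natDegree_mul (ne_zero_of_natDegree_gt hP) (ne_zero_of_natDegree_gt hQ), h]
    simp only [Finset.sum_range_succ, Finset.sum_range_zero]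
    compute_degree!
  have hP4 : P.natDegree ≤ 4 := by omega
  have hQ4 : Q.natDegree ≤ 4 := by omega
  have hP5 (n : ℕ) (hn : 5 ≤ n) : P.coeff n = 0 := coeff_eq_zero_of_natDegree_lt (by omega)
  have hQ5 (n : ℕ) (hn : 5 ≤ n) : Q.coeff n = 0 := coeff_eq_zero_of_natDegree_lt (by omega)
  have hc (n : ℕ) :
      ∑ i ∈ Finset.range (n + 1), P.coeff i * Q.coeff (n - i) = if n < 6 then 1 else 0 := by
    rw [← Finset.Nat.sum_antidiagonal_eq_sum_range_succ (fun i j => P.coeff i * Q.coeff j),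
      ← coeff_mul, h]
    simp [coeff_X_pow]
  obtain ⟨hP0, hQ0⟩ : P.coeff 0 = 1 ∧ Q.coeff 0 = 1 := by simpa using hc 0
  have e₁ := hc 1; have e₂ := hc 2; have e₃ := hc 3; have e₄ := hc 4
  have e₅ := hc 5; have e₆ := hc 6; have e₇ := hc 7; have e₈ := hc 8
  simp (disch := omega) only [Finset.sum_range_succ, Finset.sum_range_zero, Nat.reduceSub,
    Nat.sub_self, Nat.reduceLT, if_true, if_false, Nat.lt_irrefl, hP0, hQ0, hP5, hQ5, zero_add,
    add_zero, one_mul, mul_one, zero_mul, mul_zero] at e₁ e₂ e₃ e₄ e₅ e₆ e₇ e₈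
  rcases coeff_eqs_of_mul_eq_geom_sum_six _ _ _ _ _ _ _ _ e₁ e₂ e₃ e₄ e₅ e₆ e₇ e₈
    with h | h | h | h <;>
    simp only [Prod.mk.injEq] at h <;>
    [left; (right; left); (right; right; left); (right; right; right)] <;>
    exact ⟨(ext_iff_natDegree_le hP4 (by compute_degree!)).2 fun i hi => by
      interval_cases i <;> simp [h, hP0, coeff_one, coeff_X],
      (ext_iff_natDegree_le hQ4 (by compute_degree!)).2 fun i hi => by
      interval_cases i <;> simp [h, hQ0, coeff_one, coeff_X]⟩

theorem one_le_natDegree_of_one_le_degree_expand {R : Type*} [CommSemiring R] {m : ℕ}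
    {f : R[X]} (hf : 1 ≤ (expand R m f).degree) : 1 ≤ f.natDegree := by
  have := le_natDegree_of_coe_le_degree hf
  rw [natDegree_expand] at this
  exact Nat.pos_of_mul_pos_right this

/-- For `m ≥ 1`, every factorization over `ℕ` of
`1 + t^m + t^(2m) + t^(3m) + t^(4m) + t^(5m)` into two nonconstant polynomials
is, up to order, either `(1 + t^m)(1 + t^(2m) + t^(4m))` or
`(1 + t^m + t^(2m))(1 + t^(3m))`. -/
theorem hexagon_poincare_poly_factorizations
    (m : ℕ) (hm : 1 ≤ m)
    (p q : Polynomial ℕ)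
    (hp : 1 ≤ p.degree) (hq : 1 ≤ q.degree)
    (h : p * q = 1 + X ^ m + X ^ (2 * m) + X ^ (3 * m) + X ^ (4 * m) + X ^ (5 * m)) :
    ((p = 1 + X ^ m ∧ q = 1 + X ^ (2 * m) + X ^ (4 * m)) ∨
      (p = 1 + X ^ (2 * m) + X ^ (4 * m) ∧ q = 1 + X ^ m)) ∨
    ((p = 1 + X ^ m + X ^ (2 * m) ∧ q = 1 + X ^ (3 * m)) ∨
      (p = 1 + X ^ (3 * m) ∧ q = 1 + X ^ m + X ^ (2 * m))) := by
  have hm₀ : m ≠ 0 := by omega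
  rw [show (1 + X ^ m + X ^ (2 * m) + X ^ (3 * m) + X ^ (4 * m) + X ^ (5 * m) : ℕ[X]) =
      expand ℕ m (∑ i ∈ Finset.range 6, X ^ i) by
    simp [Finset.sum_range_succ, ← pow_mul, mul_comm]] at h
  have h₀ : p.coeff 0 * q.coeff 0 = 1 := by
    rw [← mul_coeff_zero, h, coeff_expand hm, if_pos (dvd_zero m)]
    simp
  obtain ⟨P, rfl⟩ : ∃ P, expand ℕ m P = p :=
    ⟨_, expand_contract_of_mul_eq_expand hm₀ h (right_ne_zero_of_mul_eq_one h₀)⟩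
  obtain ⟨Q, rfl⟩ : ∃ Q, expand ℕ m Q = q :=
    ⟨_, expand_contract_of_mul_eq_expand hm₀ ((mul_comm _ _).trans h)
      (left_ne_zero_of_mul_eq_one h₀)⟩
  rw [← map_mul] at h
  rcases factors_of_mul_eq_geom_sum_six (one_le_natDegree_of_one_le_degree_expand hp)
      (one_le_natDegree_of_one_le_degree_expand hq) (expand_injective hm h) with
    ⟨rfl, rfl⟩ | ⟨rfl, rfl⟩ | ⟨rfl, rfl⟩ | ⟨rfl, rfl⟩ <;>
  simp [← pow_mul, mul_comm]
end

section
/- Let m ≥ 1 be a natural number. If p and q are nonconstant polynomials with natural-number coefficients such that p · q = 1 + t^m + t^(2m) + t^(3m), then {p, q} = {1 + t^m, 1 + t^(2m)}. (This is the classification of factorizations over ℕ of the Z/2-Poincaré polynomial of the point space of a finite-dimensional quadrangle with equal parameters, used in the proof that this point space does not factor as a product.) -/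
open Polynomial

set_option maxRecDepth 8000

private lemma aux_coeff_nd (p : Polynomial ℕ) (hp0 : p ≠ 0) :
    1 ≤ p.coeff p.natDegree := by
  have h := Polynomial.mem_support_iff.mp (p.natDegree_mem_support_of_nonzero hp0)
  omega

private lemma aux_sum (p : Polynomial ℕ) (hn : 1 ≤ p.natDegree) :
    p.eval 1 = (∑ i ∈ Finset.range (p.natDegree + 1) \ {0, p.natDegree}, p.coeff i)
      + (p.coeff 0 + p.coeff p.natDegree) := by
  have hsub : ({0, p.natDegree} : Finset ℕ) ⊆ Finset.range (p.natDegree + 1) := by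
    intro i hi
    simp only [Finset.mem_insert, Finset.mem_singleton] at hi
    rcases hi with rfl | rfl <;> simp [Finset.mem_range]
  rw [Polynomial.eval_eq_sum_range]
  simp only [one_pow, mul_one]
  rw [← Finset.sum_sdiff hsub, Finset.sum_pair (by omega : (0:ℕ) ≠ p.natDegree)]

private lemma aux_binom (p : Polynomial ℕ) (h0 : p.coeff 0 = 1)
    (hn : 1 ≤ p.natDegree) (he : p.eval 1 = 2) :
    p = 1 + X ^ p.natDegree := by
  have hp0 : p ≠ 0 := fun h => by simp [h] at h0
  have hcn : 1 ≤ p.coeff p.natDegree := aux_coeff_nd p hp0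
  have hdecomp := (aux_sum p hn).symm.trans he
  have hrest : ∑ i ∈ Finset.range (p.natDegree + 1) \ {0, p.natDegree}, p.coeff i = 0 := by
    omega
  have hcn1 : p.coeff p.natDegree = 1 := by omega
  have hzero : ∀ i ∈ Finset.range (p.natDegree + 1) \ {0, p.natDegree}, p.coeff i = 0 :=
    Finset.sum_eq_zero_iff.mp hrest
  ext k
  simp only [Polynomial.coeff_add, Polynomial.coeff_one, Polynomial.coeff_X_pow]
  rcases Nat.lt_trichotomy k p.natDegree with hk | rfl | hk
  · rcases Nat.eq_zero_or_pos k with rfl | hkpos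
    · rw [h0]
      split_ifs <;> omega
    · have hzk : p.coeff k = 0 := by
        apply hzero
        simp only [Finset.mem_sdiff, Finset.mem_range, Finset.mem_insert,
          Finset.mem_singleton]
        omega
      rw [hzk]
      split_ifs <;> omega
  · rw [hcn1]
    split_ifs <;> omega
  · have hzk : p.coeff k = 0 := Polynomial.coeff_eq_zero_of_natDegree_lt hk
    rw [hzk]
    split_ifs <;> omega

/-- For `m ≥ 1`, every factorization over `ℕ` of `1 + t^m + t^(2m) + t^(3m)`
into two nonconstant polynomials is, up to order, `(1 + t^m)(1 + t^(2m))`. -/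
theorem quadrangle_poincare_poly_factorizations
    (m : ℕ) (hm : 1 ≤ m)
    (p q : Polynomial ℕ)
    (hp : 1 ≤ p.degree) (hq : 1 ≤ q.degree)
    (h : p * q = 1 + X ^ m + X ^ (2 * m) + X ^ (3 * m)) :
    (p = 1 + X ^ m ∧ q = 1 + X ^ (2 * m)) ∨
      (p = 1 + X ^ (2 * m) ∧ q = 1 + X ^ m) := by
  have hp0 : p ≠ 0 := fun hh => by simp [hh] at hp
  have hq0 : q ≠ 0 := fun hh => by simp [hh] at hq
  have hpn : 1 ≤ p.natDegree := by
    have := Polynomial.natDegree_pos_iff_degree_pos.mpr (lt_of_lt_of_le zero_lt_one hp)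
    omega
  have hqn : 1 ≤ q.natDegree := by
    have := Polynomial.natDegree_pos_iff_degree_pos.mpr (lt_of_lt_of_le zero_lt_one hq)
    omega
  -- constant coefficients
  have hc0 : p.coeff 0 * q.coeff 0 = 1 := by
    have h0 := congrArg (fun r => Polynomial.coeff r 0) h
    simp only [Polynomial.mul_coeff_zero, Polynomial.coeff_add, Polynomial.coeff_one,
      Polynomial.coeff_X_pow] at h0
    rw [h0]
    split_ifs <;> omega
  have hpc0 : p.coeff 0 = 1 := Nat.eq_one_of_mul_eq_one_left (by rwa [mul_comm] at hc0)
  have hqc0 : q.coeff 0 = 1 := Nat.eq_one_of_mul_eq_one_left hc0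
  -- evaluation at 1
  have hev : p.eval 1 * q.eval 1 = 4 := by
    have h1 := congrArg (fun r => Polynomial.eval 1 r) h
    simpa using h1
  have hpe2 : 2 ≤ p.eval 1 := by
    have := aux_sum p hpn
    have := aux_coeff_nd p hp0
    omega
  have hqe2 : 2 ≤ q.eval 1 := by
    have := aux_sum q hqn
    have := aux_coeff_nd q hq0
    omega
  have hpe : p.eval 1 = 2 := by nlinarith
  have hqe : q.eval 1 = 2 := by nlinarith
  obtain ⟨a, ha⟩ : ∃ a, p.natDegree = a := ⟨_, rfl⟩
  obtain ⟨b, hb⟩ : ∃ b, q.natDegree = b := ⟨_, rfl⟩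
  rw [ha] at hpn
  rw [hb] at hqn
  have hpeq : p = 1 + X ^ a := ha ▸ aux_binom p hpc0 (ha ▸ hpn) hpe
  have hqeq : q = 1 + X ^ b := hb ▸ aux_binom q hqc0 (hb ▸ hqn) hqe
  -- degrees
  have hdeg : a + b = 3 * m := by
    have h1 : (p * q).natDegree = a + b := by
      rw [Polynomial.natDegree_mul hp0 hq0, ha, hb]
    have h2 : ((1 : Polynomial ℕ) + X ^ m + X ^ (2*m) + X ^ (3*m)).natDegree = 3 * m := by
      compute_degree!
      all_goals omega
    rw [h] at h1
    omega
  have h' : (1 : Polynomial ℕ) + X ^ a + X ^ b + X ^ (a + b)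
      = 1 + X ^ m + X ^ (2*m) + X ^ (3*m) := by
    rw [← h, hpeq, hqeq]; ring
  have hma : a = m ∨ a = 2 * m := by
    have hc := congrArg (fun r => Polynomial.coeff r a) h'
    simp only [Polynomial.coeff_add, Polynomial.coeff_one, Polynomial.coeff_X_pow] at hc
    split_ifs at hc <;> omega
  rcases hma with h1 | h1
  · left
    exact ⟨by rw [hpeq, h1], by rw [hqeq, show b = 2 * m by omega]⟩
  · right
    exact ⟨by rw [hpeq, h1], by rw [hqeq, show b = m by omega]⟩
end

section
/- There is no F₂-algebra homomorphism φ from F₂[x, y]/(x² + xy + y²) to F₂[x]/(x³) sending the class of x to the class of x. (This is the algebraic core of the theorem that for a finite-dimensional projective plane or hexagon the flag bundle F → P admits no continuous section, and of Breitsprecher's theorem: a section would induce a ring retraction from the Z/2-cohomology of the flag space, in which the classes x₁ = pr₁*(x_m) and y₁ = pr₂*(y_m) satisfy x₁² + x₁y₁ + y₁² = 0, onto the cohomology ring F₂[x_m]/(x_m³) of the point space.) -/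
open Polynomial

set_option synthInstance.maxHeartbeats 1000000 in
/-- There is no `F₂`-algebra homomorphism from `F₂[x, y]/(x² + xy + y²)` to
`F₂[x]/(x³)` sending the class of `x` to the class of `x`. -/
theorem no_section_projective_plane_hexagon :
    ¬ ∃ φ : (MvPolynomial (Fin 2) (ZMod 2) ⧸
        Ideal.span {(MvPolynomial.X 0 : MvPolynomial (Fin 2) (ZMod 2)) ^ 2 +
          MvPolynomial.X 0 * MvPolynomial.X 1 + MvPolynomial.X 1 ^ 2}) →ₐ[ZMod 2]
        (Polynomial (ZMod 2) ⧸ Ideal.span {(X : Polynomial (ZMod 2)) ^ 3}),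
      φ (Ideal.Quotient.mk _ (MvPolynomial.X 0)) = Ideal.Quotient.mk _ X := by
  rintro ⟨φ, hφ⟩
  obtain ⟨p, hp⟩ := Ideal.Quotient.mk_surjective
    (I := Ideal.span {(X : Polynomial (ZMod 2)) ^ 3})
    (φ (Ideal.Quotient.mk _ (MvPolynomial.X 1)))
  have h0 : φ (Ideal.Quotient.mk _ ((MvPolynomial.X 0 : MvPolynomial (Fin 2) (ZMod 2)) ^ 2 +
      MvPolynomial.X 0 * MvPolynomial.X 1 + MvPolynomial.X 1 ^ 2)) = 0 := by
    have hz : (Ideal.Quotient.mk (Ideal.span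
        {(MvPolynomial.X 0 : MvPolynomial (Fin 2) (ZMod 2)) ^ 2 +
          MvPolynomial.X 0 * MvPolynomial.X 1 + MvPolynomial.X 1 ^ 2}))
        ((MvPolynomial.X 0 : MvPolynomial (Fin 2) (ZMod 2)) ^ 2 +
          MvPolynomial.X 0 * MvPolynomial.X 1 + MvPolynomial.X 1 ^ 2) = 0 :=
      Ideal.Quotient.eq_zero_iff_mem.mpr (Ideal.subset_span rfl)
    rw [hz, map_zero]
  have h1 : (Ideal.Quotient.mk (Ideal.span {(X : Polynomial (ZMod 2)) ^ 3}))
      (X ^ 2 + X * p + p ^ 2) = 0 := by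
    simpa only [map_add, map_mul, map_pow, hφ, hp] using h0
  rw [Ideal.Quotient.eq_zero_iff_mem, Ideal.mem_span_singleton] at h1
  obtain ⟨r, hr⟩ := h1
  have h2 : (X ^ 2 + X * p + p ^ 2 : Polynomial (ZMod 2)).coeff 2 = 0 := by
    rw [hr, mul_comm, Polynomial.coeff_mul_X_pow']
    simp
  have hsq : ∀ c : ZMod 2, c * c = c := by decide
  rw [pow_two p, Polynomial.coeff_add, Polynomial.coeff_add, Polynomial.coeff_X_pow,
    Polynomial.coeff_X_mul, Polynomial.coeff_mul] at h2
  rw [Finset.Nat.sum_antidiagonal_eq_sum_range_succ_mk] at h2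
  simp [Finset.sum_range_succ, hsq] at h2
  rw [mul_comm (p.coeff 2)] at h2
  revert h2
  generalize p.coeff 0 * p.coeff 2 = a
  generalize p.coeff 1 = b
  revert a b
  decide
end

section
/- Let (α, β) be either (1, 2) or (2, 1). There is no ℚ-algebra homomorphism φ from ℚ[x, y]/(β·x² − αβ·xy + α·y²) to ℚ[x]/(x⁴) sending the class of x to the class of x. (This is the algebraic core of the theorem that for a finite-dimensional quadrangle with equal parameters m = m' > 1 the flag bundle F → P admits no continuous section: a section would induce a ring retraction from the rational cohomology of the flag space, where x₁² = α·x₂, y₁² = β·y₂ and x₁y₁ = x₂ + y₂, hence β·x₁² − αβ·x₁y₁ + α·y₁² = 0, onto the cohomology ring ℚ[x_m]/(x_m⁴) of the point space.) -/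
open Polynomial

/-- The relation `β·x² − αβ·xy + α·y²` in `ℚ[x, y]` (with `x = X 0`, `y = X 1`). -/
noncomputable def quadrangleRelation (α β : ℚ) : MvPolynomial (Fin 2) ℚ :=
  MvPolynomial.C β * MvPolynomial.X 0 ^ 2 -
    MvPolynomial.C (α * β) * (MvPolynomial.X 0 * MvPolynomial.X 1) +
    MvPolynomial.C α * MvPolynomial.X 1 ^ 2

set_option maxHeartbeats 1000000 in
set_option synthInstance.maxHeartbeats 400000 in
/-- For `(α, β) ∈ {(1, 2), (2, 1)}`, there is no `ℚ`-algebra homomorphism from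
`ℚ[x, y]/(β·x² − αβ·xy + α·y²)` to `ℚ[x]/(x⁴)` sending the class of `x` to the
class of `x`. -/
theorem no_section_quadrangle_equal_parameters
    (α β : ℚ) (hαβ : (α = 1 ∧ β = 2) ∨ (α = 2 ∧ β = 1)) :
    ¬ ∃ φ : (MvPolynomial (Fin 2) ℚ ⧸
        Ideal.span {quadrangleRelation α β}) →ₐ[ℚ]
        (Polynomial ℚ ⧸ Ideal.span {(X : Polynomial ℚ) ^ 4}),
      φ (Ideal.Quotient.mk _ (MvPolynomial.X 0)) = Ideal.Quotient.mk _ X := by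
  rintro ⟨φ, hφ⟩
  obtain ⟨p, hp⟩ := Ideal.Quotient.mk_surjective
    (φ (Ideal.Quotient.mk (Ideal.span {quadrangleRelation α β}) (MvPolynomial.X 1)))
  have hrel : Ideal.Quotient.mk (Ideal.span {quadrangleRelation α β})
      (MvPolynomial.C β * MvPolynomial.X 0 ^ 2 -
        MvPolynomial.C (α * β) * (MvPolynomial.X 0 * MvPolynomial.X 1) +
        MvPolynomial.C α * MvPolynomial.X 1 ^ 2) = 0 := by
    rw [Ideal.Quotient.eq_zero_iff_mem]
    exact Ideal.subset_span rfl
  have h := congrArg φ hrel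
  have hC : ∀ c : ℚ, φ (Ideal.Quotient.mk _ (MvPolynomial.C c)) =
      Ideal.Quotient.mk (Ideal.span {(X : Polynomial ℚ) ^ 4}) (C c) := by
    intro c
    have h1 : (Ideal.Quotient.mk (Ideal.span {quadrangleRelation α β}) (MvPolynomial.C c))
        = algebraMap ℚ _ c := rfl
    have h2 : (Ideal.Quotient.mk (Ideal.span {(X : Polynomial ℚ) ^ 4}) (C c))
        = algebraMap ℚ _ c := rfl
    rw [h1, h2, AlgHom.commutes]
  simp only [map_add, map_sub, map_mul, map_pow, hC, map_zero] at h
  rw [hφ, ← hp] at h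
  have hmem : (C β * X ^ 2 - C (α * β) * (X * p) + C α * p ^ 2 : Polynomial ℚ) ∈
      Ideal.span {(X : Polynomial ℚ) ^ 4} := by
    rw [← Ideal.Quotient.eq_zero_iff_mem]
    simpa using h
  obtain ⟨s, hs⟩ := Ideal.mem_span_singleton'.mp hmem
  have h0 := congrArg (fun f : Polynomial ℚ => f.coeff 0) hs
  have h2 := congrArg (fun f : Polynomial ℚ => f.coeff 2) hs
  simp only [pow_two, coeff_mul_X_pow', coeff_add, coeff_sub, coeff_C_mul, coeff_X_pow,
    coeff_mul, Finset.Nat.sum_antidiagonal_eq_sum_range_succ_mk, Finset.sum_range_succ,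
    Finset.sum_range_zero, coeff_X_zero, coeff_X_one, coeff_X] at h0 h2
  norm_num at h0 h2
  have hα : α ≠ 0 := by rcases hαβ with ⟨ha, hb⟩ | ⟨ha, hb⟩ <;> rw [ha] <;> norm_num
  have ha0 : p.coeff 0 = 0 := by
    rcases h0 with h | h
    · exact absurd h hα
    · nlinarith [h]
  rw [ha0] at h2
  rcases hαβ with ⟨ha, hb⟩ | ⟨ha, hb⟩ <;> rw [ha, hb] at h2 <;>
    nlinarith [sq_nonneg (p.coeff 1 - 1), sq_nonneg (p.coeff 1), sq_nonneg (2 * p.coeff 1 - 1), h2]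
end

section
/- There is no F₂-algebra homomorphism s from F₂[x, y, z]/(x⁴, y², z², x² + xy + z) to F₂[y, z]/(y², z²) sending the class of y to the class of y and the class of z to the class of z. (This is the algebraic core of the theorem that for a finite-dimensional quadrangle with parameters (1, 1) and orientable point space the bundle F → L admits no continuous section: the Z/2-cohomology ring of the flag space is F₂[x₁, y₁, y₂]/(x₁⁴, y₁², y₂², x₁² + y₂ + x₁y₁), that of the line space is F₂[y₁, y₂]/(y₁², y₂²), and a section would induce a ring retraction fixing y₁ and y₂.) -/
/-!
Setting `y = 0` and `z = ε` maps `F₂[y, z]/(y², z²)` onto the dual numbers `F₂[ε]`. Composed with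
such an `s`, the relation `x² + xy + z = 0` would make `ε` a square in `F₂[ε]`; but in
characteristic two `(a + bε)² = a²`, so no square has a nonzero `ε`-component.
-/

open MvPolynomial DualNumber TrivSqZeroExt

theorem DualNumber.sq_ne_eps {R : Type*} [CommRing R] [CharP R 2] (u : R[ε]) : u ^ 2 ≠ ε := by
  have : Nontrivial R := CharP.nontrivial_of_char_ne_one (v := 2) (by norm_num)
  intro h
  have h_snd := congrArg snd h
  rw [snd_pow, snd_eps, nsmul_eq_mul, Nat.cast_ofNat, CharTwo.two_eq_zero, zero_mul] at h_snd
  exact zero_ne_one h_snd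

noncomputable def quotientSqToDualNumber (R : Type*) [CommRing R] :
    (MvPolynomial (Fin 2) R ⧸ Ideal.span {(X 0 : MvPolynomial (Fin 2) R) ^ 2, X 1 ^ 2}) →ₐ[R]
      R[ε] :=
  Ideal.Quotient.liftₐ _ (aeval ![0, ε]) fun _ ha => RingHom.mem_ker.mp <|
    (Ideal.span_le (I := RingHom.ker (aeval ![(0 : R[ε]), ε]))).mpr
      (by rintro p (rfl | rfl) <;> simp [RingHom.mem_ker]) ha

@[simp]
theorem quotientSqToDualNumber_mk_X (R : Type*) [CommRing R] (i : Fin 2) :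
    quotientSqToDualNumber R (Ideal.Quotient.mk _ (X i)) = ![0, ε] i :=
  aeval_X (R := R) ![0, ε] i

/-- There is no `F₂`-algebra homomorphism from `F₂[x, y, z]/(x⁴, y², z², x² + xy + z)`
to `F₂[y, z]/(y², z²)` sending the class of `y` to the class of `y` and the class of
`z` to the class of `z`. -/
theorem no_section_one_one_quadrangle :
    ¬ ∃ s : (MvPolynomial (Fin 3) (ZMod 2) ⧸
        Ideal.span {(MvPolynomial.X 0 : MvPolynomial (Fin 3) (ZMod 2)) ^ 4,
          MvPolynomial.X 1 ^ 2, MvPolynomial.X 2 ^ 2,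
          MvPolynomial.X 0 ^ 2 + MvPolynomial.X 0 * MvPolynomial.X 1 +
            MvPolynomial.X 2}) →ₐ[ZMod 2]
        (MvPolynomial (Fin 2) (ZMod 2) ⧸
          Ideal.span {(MvPolynomial.X 0 : MvPolynomial (Fin 2) (ZMod 2)) ^ 2,
            MvPolynomial.X 1 ^ 2}),
      s (Ideal.Quotient.mk _ (MvPolynomial.X 1)) =
          Ideal.Quotient.mk _ (MvPolynomial.X 0) ∧
        s (Ideal.Quotient.mk _ (MvPolynomial.X 2)) =
          Ideal.Quotient.mk _ (MvPolynomial.X 1) := by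
  rintro ⟨s, hy, hz⟩
  have relation : quotientSqToDualNumber (ZMod 2)
      (s (Ideal.Quotient.mk _ (X 0 ^ 2 + X 0 * X 1 + X 2))) = 0 := by
    rw [Ideal.Quotient.eq_zero_iff_mem.mpr (Ideal.subset_span (by simp)), map_zero, map_zero]
  simp only [map_add, map_mul, map_pow, hy, hz, quotientSqToDualNumber_mk_X,
    Matrix.cons_val_zero, Matrix.cons_val_one, mul_zero, add_zero] at relation
  refine DualNumber.sq_ne_eps _ ((eq_neg_of_add_eq_zero_left relation).trans ?_)
  ext <;> simp
end
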